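/- arXiv:1505.01298 — 4 statements merged into one kernel-verified Lean document; each statement's English description precedes it below -/
import Mathlib

section
/- There exists a constant C > 0 such that for every integer N ≥ 1 the following holds: for any probability space carrying ℝ²-valued random variables X and Y such that ‖X‖ = √e almost surely and ‖Y‖² has the same law as S_N, one has E[‖X − Y‖²] ≥ C/N. (This is the paper's conclusion that the Wasserstein-2 distance between the law of the solution at time 1 of the SDE dx₁ = x₂∘dW, dx₂ = −x₁∘dW started at (1,0) — whose norm equals √e almost surely — and the law of its Euler approximation with step size h = 1/N is at least C√h, no matter what coupling is used.) -/
open MeasureTheory ProbabilityTheory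

/-!
Since `‖X‖ = √e` is deterministic, `E‖X - Y‖² ≥ E(√e - ‖Y‖)² ≥ Var ‖Y‖`, and `‖Y‖` has the law of
`√S_N = ∏ φ(Z_j)` with `φ x = √(1 + x²/N)`. For i.i.d. factors with mean `m ≥ 1` and second
moment `c`, `Var ∏ φ(Z_j) = c^N - (m²)^N ≥ N (c - m²) = N Var φ(Z)`. Finally `Var φ(Z) ≳ 1/N²`:
`φ ≥ √(1 + 1/N)` on `[1, ∞)` and `φ ≤ √(1 + 1/(4N))` on `[-1/2, 1/2]`, two sets of positive
Gaussian mass, and these two values differ by at least `1/(4N)`, so Chebyshev's inequality bounds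
the variance from below.
-/

theorem mul_pow_pred_mul_sub_le_pow_sub_pow {x y : ℝ} (hy : 0 ≤ y) (hyx : y ≤ x) (n : ℕ) :
    n * y ^ (n - 1) * (x - y) ≤ x ^ n - y ^ n := by
  induction n with
  | zero => simp
  | succ k ih =>
    rcases k with _ | k
    · simp
    · simp only [Nat.add_sub_cancel] at ih ⊢
      have hterm : 0 ≤ (k + 1 : ℕ) * y ^ k * (x - y) := by
        have := sub_nonneg.mpr hyx
        positivity
      calc ((k + 1 + 1 : ℕ) : ℝ) * y ^ (k + 1) * (x - y)
          = y * ((k + 1 : ℕ) * y ^ k * (x - y)) + y ^ (k + 1) * (x - y) := by push_cast; ring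
        _ ≤ x * (x ^ (k + 1) - y ^ (k + 1)) + y ^ (k + 1) * (x - y) :=
          add_le_add_left ((mul_le_mul_of_nonneg_right hyx hterm).trans
            (mul_le_mul_of_nonneg_left ih (hy.trans hyx))) _
        _ = x ^ (k + 1 + 1) - y ^ (k + 1 + 1) := by ring

namespace ProbabilityTheory

variable {Ω ι : Type*} {mΩ : MeasurableSpace Ω} {μ : Measure Ω}

theorem min_measureReal_mul_sq_le_variance [IsFiniteMeasure μ] {f : Ω → ℝ} (hf : MemLp f 2 μ)
    {A B : Set Ω} {u v : ℝ} (huv : v < u) (hA : ∀ x ∈ A, u ≤ f x) (hB : ∀ x ∈ B, f x ≤ v) :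
    min (μ.real A) (μ.real B) * ((u - v) / 2) ^ 2 ≤ Var[f; μ] := by
  have hδ : 0 < (u - v) / 2 := by linarith
  have chebyshev : μ.real {x | (u - v) / 2 ≤ |f x - μ[f]|} ≤ Var[f; μ] / ((u - v) / 2) ^ 2 :=
    ENNReal.toReal_le_of_le_ofReal (div_nonneg (variance_nonneg f μ) (sq_nonneg _))
      (meas_ge_le_variance_div_sq hf hδ)
  rw [← le_div_iff₀ (by positivity)]
  refine le_trans ?_ chebyshev
  rcases le_or_gt μ[f] ((u + v) / 2) with hmean | hmean
  · refine (min_le_left _ _).trans (measureReal_mono fun x hx => ?_)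
    show (u - v) / 2 ≤ |f x - μ[f]|
    exact le_abs.mpr (Or.inl (by linarith [hA x hx]))
  · refine (min_le_right _ _).trans (measureReal_mono fun x hx => ?_)
    show (u - v) / 2 ≤ |f x - μ[f]|
    exact le_abs.mpr (Or.inr (by linarith [hB x hx]))

theorem variance_norm_le_integral_norm_sub_sq [IsProbabilityMeasure μ] {E : Type*}
    [NormedAddCommGroup E] {X Y : Ω → E} {a : ℝ} (hX : AEStronglyMeasurable X μ)
    (hY : AEStronglyMeasurable Y μ) (hXa : ∀ᵐ ω ∂μ, ‖X ω‖ = a) :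
    Var[fun ω => ‖Y ω‖; μ] ≤ ∫ ω, ‖X ω - Y ω‖ ^ 2 ∂μ := by
  by_cases hL2 : MemLp (fun ω => ‖Y ω‖) 2 μ
  swap
  · rw [variance_of_not_memLp hY.norm hL2]
    exact integral_nonneg fun ω => sq_nonneg _
  have hint : Integrable (fun ω => ‖X ω - Y ω‖ ^ 2) μ := by
    refine ((integrable_const (2 * a ^ 2)).add (hL2.integrable_sq.const_mul 2)).mono'
      ((hX.sub hY).norm.pow 2) ?_
    filter_upwards [hXa] with ω hω
    have := norm_sub_le (X ω) (Y ω)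
    rw [Pi.add_apply, Real.norm_of_nonneg (sq_nonneg _)]
    nlinarith [norm_nonneg (X ω - Y ω), norm_nonneg (Y ω), sq_nonneg (a - ‖Y ω‖)]
  calc Var[fun ω => ‖Y ω‖; μ] = Var[fun ω => a - ‖Y ω‖; μ] := (variance_const_sub hY.norm a).symm
    _ ≤ ∫ ω, (a - ‖Y ω‖) ^ 2 ∂μ :=
      variance_le_expectation_sq (aestronglyMeasurable_const.sub hY.norm)
    _ ≤ ∫ ω, ‖X ω - Y ω‖ ^ 2 ∂μ := by
      refine integral_mono_of_nonneg (ae_of_all _ fun ω => sq_nonneg _) hint ?_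
      filter_upwards [hXa] with ω hω
      rw [← hω, ← sq_abs]
      exact pow_le_pow_left₀ (abs_nonneg _) (abs_norm_sub_norm_le _ _) 2

theorem iIndepFun.integrable_finset_prod {W : ι → Ω → ℝ} (hi : iIndepFun W μ)
    (hm : ∀ j, Measurable (W j)) (hint : ∀ j, Integrable (W j) μ) (s : Finset ι) :
    Integrable (∏ j ∈ s, W j) μ := by
  refine ⟨Finset.aestronglyMeasurable_prod s fun j _ => (hm j).aestronglyMeasurable, ?_⟩
  have henorm : ∀ ω, ‖(∏ j ∈ s, W j) ω‖ₑ = ∏ j ∈ s, ‖W j ω‖ₑ := fun ω => by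
    simp [enorm_eq_nnnorm, nnnorm_prod]
  simp only [HasFiniteIntegral, henorm]
  rw [lintegral_prod_eq_prod_lintegral_of_indepFun s (fun j ω => ‖W j ω‖ₑ)
    (hi.comp _ fun _ => measurable_enorm) fun j => (hm j).enorm]
  exact ENNReal.prod_lt_top fun j _ => (hint j).2

theorem iIndepFun.integral_finset_prod {W : ι → Ω → ℝ} (hi : iIndepFun W μ)
    (hm : ∀ j, AEStronglyMeasurable (W j) μ) (s : Finset ι) :
    μ[∏ j ∈ s, W j] = ∏ j ∈ s, μ[W j] := by
  rw [← Finset.prod_coe_sort s, ← Finset.prod_coe_sort s]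
  exact (hi.precomp Subtype.val_injective).integral_prod_eq_prod_integral fun j => hm j

theorem iIndepFun.variance_finset_prod {W : ι → Ω → ℝ} (hi : iIndepFun W μ)
    (hm : ∀ j, Measurable (W j)) (hW : ∀ j, MemLp (W j) 2 μ) (s : Finset ι) :
    Var[∏ j ∈ s, W j; μ] = ∏ j ∈ s, μ[W j ^ 2] - ∏ j ∈ s, μ[W j] ^ 2 := by
  have := hi.isProbabilityMeasure
  have hsq : iIndepFun (fun j => W j ^ 2) μ :=
    (hi.comp (fun _ (x : ℝ) => x ^ 2) fun _ => by fun_prop :)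
  have hprod_sq : (∏ j ∈ s, W j) ^ 2 = ∏ j ∈ s, W j ^ 2 := (Finset.prod_pow s 2 W).symm
  have hL2 : MemLp (∏ j ∈ s, W j) 2 μ := by
    refine (memLp_two_iff_integrable_sq
      (Finset.aestronglyMeasurable_prod s fun j _ => (hm j).aestronglyMeasurable)).mpr ?_
    show Integrable ((∏ j ∈ s, W j) ^ 2) μ
    rw [hprod_sq]
    exact hsq.integrable_finset_prod (fun j => (hm j).pow_const 2) (fun j => (hW j).integrable_sq) s
  rw [variance_eq_sub hL2, hprod_sq, hsq.integral_finset_prod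
      (fun j => ((hm j).pow_const 2).aestronglyMeasurable),
    hi.integral_finset_prod (fun j => (hm j).aestronglyMeasurable), Finset.prod_pow]

open Finset in
theorem iIndepFun.card_mul_pow_mul_variance_le_variance_finset_prod {Ω' : Type*}
    {mΩ' : MeasurableSpace Ω'} {ν : Measure Ω'} [IsProbabilityMeasure ν] {W : ι → Ω → ℝ}
    {V : Ω' → ℝ} (hi : iIndepFun W μ) (hm : ∀ j, Measurable (W j))
    (hid : ∀ j, IdentDistrib (W j) V μ ν) (hV : MemLp V 2 ν) (s : Finset ι) :
    #s * (ν[V] ^ 2) ^ (#s - 1) * Var[V; ν] ≤ Var[∏ j ∈ s, W j; μ] := by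
  have hmean : ∀ j ∈ s, μ[W j] ^ 2 = ν[V] ^ 2 := fun j _ => by rw [(hid j).integral_eq]
  have hsq : ∀ j ∈ s, μ[W j ^ 2] = ν[V ^ 2] := fun j _ => (hid j).sq.integral_eq
  have hvar := variance_eq_sub hV
  have hmoments : ν[V] ^ 2 ≤ ν[V ^ 2] := sub_nonneg.mp (hvar ▸ variance_nonneg V ν)
  rw [hi.variance_finset_prod hm (fun j => (hid j).symm.memLp_snd hV), prod_congr rfl hsq,
    prod_congr rfl hmean, prod_const, prod_const, hvar]
  exact mul_pow_pred_mul_sub_le_pow_sub_pow (sq_nonneg _) hmoments #s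

theorem IdentDistrib.variance_norm_eq_variance_sqrt {Ω' E : Type*} {mΩ' : MeasurableSpace Ω'}
    {ν : Measure Ω'} [NormedAddCommGroup E] {Y : Ω' → E} {T : Ω → ℝ}
    (h : IdentDistrib (fun ω' => ‖Y ω'‖ ^ 2) T ν μ) :
    Var[fun ω' => ‖Y ω'‖; ν] = Var[fun ω => √(T ω); μ] := by
  simpa only [Function.comp_def, Real.sqrt_sq (norm_nonneg _)] using
    (h.comp (u := Real.sqrt) (by fun_prop)).variance_eq

end ProbabilityTheory

theorem memLp_two_sqrt_one_add_sq_div_gaussianReal (m : ℝ) (v : NNReal) {N : ℝ} (hN : 0 < N) :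
    MemLp (fun x => √(1 + x ^ 2 / N)) 2 (gaussianReal m v) := by
  refine (memLp_two_iff_integrable_sq (by fun_prop)).mpr ?_
  have hsq : ∀ x : ℝ, √(1 + x ^ 2 / N) ^ 2 = 1 + x ^ 2 / N := fun x => Real.sq_sqrt (by positivity)
  simp only [hsq]
  exact (integrable_const 1).add ((memLp_id_gaussianReal 2).integrable_sq.div_const N)

theorem exists_pos_div_sq_le_variance_sqrt_one_add_sq_div_gaussianReal :
    ∃ c > 0, ∀ N : ℝ, 1 ≤ N →
      c / N ^ 2 ≤ Var[fun x => √(1 + x ^ 2 / N); gaussianReal 0 1] := by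
  have hpos : ∀ s : Set ℝ, volume s ≠ 0 → 0 < (gaussianReal 0 1).real s := fun s hs =>
    ENNReal.toReal_pos (fun h => hs (gaussianReal_absolutelyContinuous' 0 one_ne_zero h))
      (measure_ne_top _ _)
  set p := min ((gaussianReal 0 1).real (Set.Ici 1))
    ((gaussianReal 0 1).real (Set.Icc (-1/2) (1/2)))
  have hp : 0 < p := lt_min (hpos _ (by simp)) (hpos _ (by norm_num))
  refine ⟨p / 64, by positivity, fun N hN => ?_⟩
  have hN0 : 0 < N := by linarith
  set u := √(1 + 1 / N)
  set v := √(1 + 1 / (4 * N))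
  have hsep : 1 / (4 * N) ≤ u - v := by
    have hu : u ^ 2 = 1 + 1 / N := Real.sq_sqrt (by positivity)
    have hv : v ^ 2 = 1 + 1 / (4 * N) := Real.sq_sqrt (by positivity)
    have hvu : v ≤ u := Real.sqrt_le_sqrt (by gcongr; linarith)
    have hN1 : 1 / N ≤ 1 := (div_le_one hN0).mpr hN
    have hu2 : u ≤ 3 / 2 := by nlinarith [Real.sqrt_nonneg (1 + 1 / N)]
    have hprod : (u - v) * (u + v) = 3 / (4 * N) := by
      rw [show (u - v) * (u + v) = u ^ 2 - v ^ 2 by ring, hu, hv]; field_simp; ring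
    have hsum : (u - v) * (u + v) ≤ (u - v) * 3 :=
      mul_le_mul_of_nonneg_left (by linarith) (sub_nonneg.mpr hvu)
    linarith [show 3 / (4 * N) = 3 * (1 / (4 * N)) by ring]
  have hvu : v < u := by linarith [show 0 < 1 / (4 * N) by positivity]
  have hA : ∀ x ∈ Set.Ici (1 : ℝ), u ≤ √(1 + x ^ 2 / N) := fun x hx => by
    have : 1 ≤ x ^ 2 := one_le_pow₀ hx
    exact Real.sqrt_le_sqrt (by gcongr)
  have hB : ∀ x ∈ Set.Icc (-1/2 : ℝ) (1/2), √(1 + x ^ 2 / N) ≤ v := fun x hx => by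
    have : x ^ 2 ≤ 1 / 4 := by nlinarith [hx.1, hx.2]
    have : x ^ 2 / N ≤ 1 / 4 / N := by gcongr
    exact Real.sqrt_le_sqrt (by rw [div_div] at this; linarith)
  calc p / 64 / N ^ 2 = p * (1 / (4 * N) / 2) ^ 2 := by field_simp; ring
    _ ≤ p * ((u - v) / 2) ^ 2 := by gcongr
    _ ≤ _ := min_measureReal_mul_sq_le_variance
        (memLp_two_sqrt_one_add_sq_div_gaussianReal 0 1 hN0) hvu hA hB

theorem euler_scheme_wasserstein_lower_bound_general
    {Ω : Type*} [MeasureSpace Ω]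
    (Z : ℕ → Ω → ℝ) (hmeas : ∀ j, Measurable (Z j))
    (hindep : iIndepFun Z ℙ)
    (hdist : ∀ j, Measure.map (Z j) ℙ = gaussianReal 0 1) :
    ∃ C > (0 : ℝ), ∀ N : ℕ, 1 ≤ N →
      ∀ (Ω' : Type) (_ : MeasureSpace Ω') (_ : IsProbabilityMeasure (ℙ : Measure Ω'))
        (X Y : Ω' → EuclideanSpace ℝ (Fin 2)),
        Measurable X → Measurable Y →
        (∀ᵐ ω' ∂(ℙ : Measure Ω'), ‖X ω'‖ = Real.sqrt (Real.exp 1)) →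
        Measure.map (fun ω' => ‖Y ω'‖ ^ 2) (ℙ : Measure Ω') =
          Measure.map (fun ω => ∏ j ∈ Finset.Icc 1 N, (1 + (Z j ω) ^ 2 / N)) ℙ →
        C / N ≤ ∫ ω', ‖X ω' - Y ω'‖ ^ 2 ∂(ℙ : Measure Ω') := by
  obtain ⟨c, hc, hvar⟩ := exists_pos_div_sq_le_variance_sqrt_one_add_sq_div_gaussianReal
  refine ⟨c, hc, fun N hN Ω' _ _ X Y hX hY hXnorm hlaw => ?_⟩
  have hN0 : (0 : ℝ) < N := by exact_mod_cast hN
  set φ : ℝ → ℝ := fun x => √(1 + x ^ 2 / N)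
  have hφ : Measurable φ := by fun_prop
  have hφ_L2 := memLp_two_sqrt_one_add_sq_div_gaussianReal 0 1 hN0
  have hW : ∀ j, IdentDistrib (φ ∘ Z j) φ ℙ (gaussianReal 0 1) := fun j =>
    IdentDistrib.comp ⟨(hmeas j).aemeasurable, aemeasurable_id, by rw [hdist j, Measure.map_id']⟩ hφ
  have hmean : 1 ≤ ∫ x, φ x ∂gaussianReal 0 1 := by
    calc (1 : ℝ) = ∫ _, 1 ∂gaussianReal 0 1 := by simp
      _ ≤ _ := integral_mono (integrable_const 1) (hφ_L2.integrable one_le_two)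
        fun x => Real.one_le_sqrt.mpr (le_add_of_nonneg_right (by positivity))
  have hsqrt_S : (fun ω => √(∏ j ∈ Finset.Icc 1 N, (1 + (Z j ω) ^ 2 / N))) =
      ∏ j ∈ Finset.Icc 1 N, φ ∘ Z j := by
    ext ω
    rw [Finset.prod_apply, Real.sqrt_prod _ fun j _ => by positivity]
    rfl
  calc c / N = N * 1 * (c / N ^ 2) := by field_simp
    _ ≤ (Finset.Icc 1 N).card * ((∫ x, φ x ∂gaussianReal 0 1) ^ 2) ^ ((Finset.Icc 1 N).card - 1) *
        Var[φ; gaussianReal 0 1] := by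
      rw [Nat.card_Icc, Nat.add_sub_cancel]
      gcongr
      · exact one_le_pow₀ (one_le_pow₀ hmean)
      · exact hvar N (by exact_mod_cast hN)
    _ ≤ Var[∏ j ∈ Finset.Icc 1 N, φ ∘ Z j; ℙ] :=
      (hindep.comp (fun _ => φ) fun _ => hφ).card_mul_pow_mul_variance_le_variance_finset_prod
        (fun j => hφ.comp (hmeas j)) hW hφ_L2 _
    _ = Var[fun ω' => ‖Y ω'‖; ℙ] := by
      rw [← hsqrt_S]
      exact (IdentDistrib.variance_norm_eq_variance_sqrt ⟨by fun_prop, by fun_prop, hlaw⟩).symm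
    _ ≤ ∫ ω', ‖X ω' - Y ω'‖ ^ 2 ∂ℙ :=
      variance_norm_le_integral_norm_sub_sq hX.aestronglyMeasurable hY.aestronglyMeasurable hXnorm

/-- There exists a constant `C > 0` such that for every `N ≥ 1` and any
probability space carrying `ℝ²`-valued random variables `X` and `Y` with `‖X‖ = √e` a.s.
and `‖Y‖²` distributed as `S_N = ∏_{j=1}^N (1 + Z_j²/N)`, one has `E[‖X − Y‖²] ≥ C/N`.
This expresses that the Wasserstein-2 distance between the law of the SDE solution at
time 1 and its Euler approximation with step size `h = 1/N` is at least `C √h`. -/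
theorem euler_scheme_wasserstein_lower_bound
    {Ω : Type*} [MeasureSpace Ω] [IsProbabilityMeasure (ℙ : Measure Ω)]
    (Z : ℕ → Ω → ℝ) (hmeas : ∀ j, Measurable (Z j))
    (hindep : iIndepFun Z ℙ)
    (hdist : ∀ j, Measure.map (Z j) ℙ = gaussianReal 0 1) :
    ∃ C > (0 : ℝ), ∀ N : ℕ, 1 ≤ N →
      ∀ (Ω' : Type) (_ : MeasureSpace Ω') (_ : IsProbabilityMeasure (ℙ : Measure Ω'))
        (X Y : Ω' → EuclideanSpace ℝ (Fin 2)),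
        Measurable X → Measurable Y →
        (∀ᵐ ω' ∂(ℙ : Measure Ω'), ‖X ω'‖ = Real.sqrt (Real.exp 1)) →
        Measure.map (fun ω' => ‖Y ω'‖ ^ 2) (ℙ : Measure Ω') =
          Measure.map (fun ω => ∏ j ∈ Finset.Icc 1 N, (1 + (Z j ω) ^ 2 / N)) ℙ →
        C / N ≤ ∫ ω', ‖X ω' - Y ω'‖ ^ 2 ∂(ℙ : Measure Ω') :=
  euler_scheme_wasserstein_lower_bound_general Z hmeas hindep hdist
end

section
/- For every integer N ≥ 1, E|1 − ∑_{j=1}^N log(1 + Z_j²/N)| ≥ E|1 − (1/N)∑_{j=1}^N Z_j²| − 3/(2N). (This is the comparison step in the proof of (e-uc), obtained from the pointwise estimate 0 ≤ x − log(1+x) ≤ x²/2 for x ≥ 0 together with E[Z_j⁴] = 3.) -/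
open MeasureTheory ProbabilityTheory Real
open scoped Nat

/-! For `a ≥ 0` one has `0 ≤ a - log (1 + a) ≤ a ^ 2 / 2`, so with `a_j = Z_j ^ 2 / N` the two
expressions inside the absolute values differ by at most `∑ j, Z_j ^ 4 / (2 N ^ 2)`, whose
expectation is `3 / (2 N)` because a standard Gaussian has fourth moment `3`. -/

theorem sub_sq_div_two_le_log_one_add {x : ℝ} (hx : 0 ≤ x) : x - x ^ 2 / 2 ≤ log (1 + x) :=
  calc x - x ^ 2 / 2 ≤ 2 * x / (x + 2) := by
        rw [le_div_iff₀ (by linarith)]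
        nlinarith [pow_nonneg hx 3]
    _ ≤ log (1 + x) := le_log_one_add_of_nonneg hx

theorem abs_sum_sub_sum_log_one_add_le {ι : Type*} (s : Finset ι) {a : ι → ℝ}
    (ha : ∀ i ∈ s, 0 ≤ a i) :
    |∑ i ∈ s, a i - ∑ i ∈ s, log (1 + a i)| ≤ ∑ i ∈ s, a i ^ 2 / 2 := by
  rw [← Finset.sum_sub_distrib]
  refine (Finset.abs_sum_le_sum_abs _ _).trans (Finset.sum_le_sum fun i hi => ?_)
  have hlog_le : log (1 + a i) ≤ a i := by
    linarith [log_le_sub_one_of_pos (x := 1 + a i) (by linarith [ha i hi])]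
  rw [abs_of_nonneg (by linarith)]
  linarith [sub_sq_div_two_le_log_one_add (ha i hi)]

theorem integral_abs_le_integral_abs_add {Ω : Type*} [MeasurableSpace Ω] {μ : Measure Ω}
    {f g h : Ω → ℝ} (hf : Integrable f μ) (hg : AEStronglyMeasurable g μ) (hh : Integrable h μ)
    (hfg : ∀ᵐ ω ∂μ, |f ω - g ω| ≤ h ω) :
    ∫ ω, |f ω| ∂μ ≤ ∫ ω, |g ω| ∂μ + ∫ ω, h ω ∂μ := by
  have hg_int : Integrable g μ := by
    refine (hf.norm.add hh).mono' hg ?_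
    filter_upwards [hfg] with ω hω
    rw [norm_eq_abs, Pi.add_apply, norm_eq_abs]
    linarith [abs_sub_abs_le_abs_sub (g ω) (f ω), abs_sub_comm (g ω) (f ω)]
  calc ∫ ω, |f ω| ∂μ ≤ ∫ ω, (|g ω| + h ω) ∂μ := by
        refine integral_mono_ae hf.abs (hg_int.abs.add hh) ?_
        filter_upwards [hfg] with ω hω
        linarith [abs_sub_abs_le_abs_sub (f ω) (g ω)]
    _ = ∫ ω, |g ω| ∂μ + ∫ ω, h ω ∂μ := integral_add hg_int.abs hh

theorem integral_Ioi_pow_two_mul_mul_exp_neg_half_sq (k : ℕ) :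
    ∫ x in Set.Ioi (0 : ℝ), x ^ (2 * k) * exp (-(1 / 2) * x ^ 2) =
      (2 * k - 1 : ℕ)‼ * √(2 * π) / 2 := by
  have h := integral_rpow_mul_exp_neg_mul_rpow (p := 2) (q := 2 * k) (b := 1 / 2) two_pos
    (by linarith [(Nat.cast_nonneg k : (0 : ℝ) ≤ k)]) (by norm_num)
  have hcast : ∀ x : ℝ, x ^ ((2 * k : ℕ) : ℝ) * exp (-(1 / 2) * x ^ ((2 : ℕ) : ℝ)) =
      x ^ (2 * k) * exp (-(1 / 2) * x ^ 2) := fun x => by rw [rpow_natCast, rpow_natCast]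
  push_cast at hcast
  simp only [hcast] at h
  have hscale : (1 / 2 : ℝ) ^ (-(2 * k + 1) / 2 : ℝ) = 2 ^ k * √2 := by
    rw [show -((2 : ℝ) * k + 1) / 2 = -(k + 1 / 2) by ring, rpow_neg (by norm_num),
      ← inv_rpow (by norm_num), inv_div, div_one, rpow_add two_pos, rpow_natCast, sqrt_eq_rpow]
  rw [h, hscale, show ((2 : ℝ) * k + 1) / 2 = k + 1 / 2 by ring, Gamma_nat_add_half,
    sqrt_mul zero_le_two]
  field_simp

theorem integral_pow_two_mul_mul_exp_neg_half_sq (k : ℕ) :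
    ∫ x, x ^ (2 * k) * exp (-(1 / 2) * x ^ 2) = (2 * k - 1 : ℕ)‼ * √(2 * π) := by
  have heven : ∀ x : ℝ, x ^ (2 * k) * exp (-(1 / 2) * x ^ 2) =
      |x| ^ (2 * k) * exp (-(1 / 2) * |x| ^ 2) := fun x => by
    rw [pow_mul, pow_mul, sq_abs]
  rw [integral_congr_ae (Filter.Eventually.of_forall heven),
    integral_comp_abs (f := fun x => x ^ (2 * k) * exp (-(1 / 2) * x ^ 2)),
    integral_Ioi_pow_two_mul_mul_exp_neg_half_sq]
  ring

theorem integral_pow_two_mul_gaussianReal (k : ℕ) :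
    ∫ x, x ^ (2 * k) ∂gaussianReal 0 1 = (2 * k - 1 : ℕ)‼ := by
  have hpdf : ∀ x : ℝ, gaussianPDFReal 0 1 x • x ^ (2 * k) =
      (√(2 * π))⁻¹ * (x ^ (2 * k) * exp (-(1 / 2) * x ^ 2)) := fun x => by
    simp only [gaussianPDFReal, smul_eq_mul, NNReal.coe_one, mul_one, sub_zero]
    ring_nf
  simp_rw [integral_gaussianReal_eq_integral_smul one_ne_zero, hpdf]
  rw [integral_const_mul, integral_pow_two_mul_mul_exp_neg_half_sq]
  field_simp

section MapEqGaussianReal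

variable {Ω : Type*} [MeasurableSpace Ω] {μ : Measure Ω} {X : Ω → ℝ}

theorem integrable_pow_of_map_eq_gaussianReal {m : ℝ} {v : NNReal} (hX : AEMeasurable X μ)
    (h : μ.map X = gaussianReal m v) (n : ℕ) : Integrable (fun ω => X ω ^ n) μ := by
  have hid : Integrable (fun x : ℝ => x ^ n) (gaussianReal m v) := by
    refine (integrable_norm_iff (by fun_prop)).mp ?_
    simpa [norm_pow] using (memLp_id_gaussianReal (μ := m) (v := v) n).integrable_norm_pow'
  rw [← h] at hid
  exact (integrable_map_measure (continuous_pow n).aestronglyMeasurable hX).mp hid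

theorem integral_pow_four_of_map_eq_gaussianReal (hX : AEMeasurable X μ)
    (h : μ.map X = gaussianReal 0 1) : ∫ ω, X ω ^ 4 ∂μ = 3 := by
  rw [← integral_map (f := fun x => x ^ 4) hX (by fun_prop), h]
  simpa using integral_pow_two_mul_gaussianReal 2

end MapEqGaussianReal

theorem log_comparison_step_general
    {Ω : Type*} [MeasureSpace Ω] [IsProbabilityMeasure (ℙ : Measure Ω)]
    (Z : ℕ → Ω → ℝ) (hmeas : ∀ j, Measurable (Z j))
    (hdist : ∀ j, Measure.map (Z j) ℙ = gaussianReal 0 1) :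
    ∀ N : ℕ, 1 ≤ N →
      (∫ ω, |1 - (1 / (N : ℝ)) * ∑ j ∈ Finset.Icc 1 N, (Z j ω) ^ 2| ∂ℙ) - 3 / (2 * N) ≤
        ∫ ω, |1 - ∑ j ∈ Finset.Icc 1 N, Real.log (1 + (Z j ω) ^ 2 / N)| ∂ℙ := by
  intro N _
  have hpow (n j : ℕ) :=
    integrable_pow_of_map_eq_gaussianReal (hmeas j).aemeasurable (hdist j) n
  have hsummand (j : ℕ) (ω : Ω) : (Z j ω ^ 2 / N) ^ 2 / 2 = Z j ω ^ 4 / (2 * N ^ 2) := by ring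
  have hquad_int : Integrable (fun ω => ∑ j ∈ Finset.Icc 1 N, (Z j ω ^ 2 / N) ^ 2 / 2) ℙ := by
    simp_rw [hsummand]
    exact integrable_finsetSum _ fun j _ => (hpow 4 j).div_const _
  have hquad : ∫ ω, ∑ j ∈ Finset.Icc 1 N, (Z j ω ^ 2 / N) ^ 2 / 2 ∂ℙ = 3 / (2 * (N : ℝ)) := by
    simp_rw [hsummand]
    rw [integral_finsetSum _ fun j _ => (hpow 4 j).div_const _]
    simp_rw [integral_div,
      integral_pow_four_of_map_eq_gaussianReal (hmeas _).aemeasurable (hdist _)]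
    rw [Finset.sum_const, Nat.card_Icc, Nat.add_sub_cancel, nsmul_eq_mul]
    field_simp
  have hcompare := integral_abs_le_integral_abs_add
    (f := fun ω => 1 - (1 / (N : ℝ)) * ∑ j ∈ Finset.Icc 1 N, Z j ω ^ 2)
    (g := fun ω => 1 - ∑ j ∈ Finset.Icc 1 N, log (1 + Z j ω ^ 2 / N))
    ((integrable_const 1).sub ((integrable_finsetSum _ fun j _ => hpow 2 j).const_mul _))
    (by fun_prop (disch := exact hmeas _) : Measurable _).aestronglyMeasurable hquad_int
    (ae_of_all _ fun ω => by
      rw [sub_sub_sub_cancel_left, abs_sub_comm, Finset.mul_sum]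
      simp_rw [one_div_mul_eq_div]
      exact abs_sum_sub_sum_log_one_add_le _ fun j _ => by positivity)
  linarith

/-- For every integer `N ≥ 1`,
`E|1 − ∑_{j=1}^N log(1 + Z_j²/N)| ≥ E|1 − (1/N)∑_{j=1}^N Z_j²| − 3/(2N)`,
where the `Z_j` are i.i.d. standard normal. -/
theorem log_comparison_step
    {Ω : Type*} [MeasureSpace Ω] [IsProbabilityMeasure (ℙ : Measure Ω)]
    (Z : ℕ → Ω → ℝ) (hmeas : ∀ j, Measurable (Z j))
    (hindep : iIndepFun Z ℙ)
    (hdist : ∀ j, Measure.map (Z j) ℙ = gaussianReal 0 1) :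
    ∀ N : ℕ, 1 ≤ N →
      (∫ ω, |1 - (1 / (N : ℝ)) * ∑ j ∈ Finset.Icc 1 N, (Z j ω) ^ 2| ∂ℙ) - 3 / (2 * N) ≤
        ∫ ω, |1 - ∑ j ∈ Finset.Icc 1 N, Real.log (1 + (Z j ω) ^ 2 / N)| ∂ℙ :=
  log_comparison_step_general Z hmeas hdist
end

section
/- Fix h > 0 and an integer d ≥ 2. Let (z_k)_{k=1}^d, (W_k)_{k=1}^d and (λ_{kl})_{1 ≤ k < l ≤ d} be jointly independent real Gaussian random variables with z_k ~ N(0, h/12), W_k ~ N(0, h) and λ_{kl} ~ N(0, h²/12). For 1 ≤ k < l ≤ d define B_{kl} := z_k W_l − z_l W_k + λ_{kl}. Then: (i) E[B_{kl}] = 0; (ii) E[B_{kl}²] = h²/4; (iii) E[B_{kl} B_{k'l'}] = 0 whenever (k,l) ≠ (k',l'); and (iv) E[B_{kl} W_m] = 0 for every m ∈ {1,…,d}. (These are the moment properties of the Gaussian approximations B^{(j)} of the Lévy area increments in equation (e-b-def), showing that they match the mean and covariance structure of Brownian Lévy area.) -/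
/-!
Write `B_kl = z_k W_l - z_l W_k + λ_kl` as the combination, with coefficients `1, -1, 1`, of the
terms `z_a W_b` and `λ_p`. Since the family is independent and centred, these terms are pairwise
orthogonal in `L²` and orthogonal to every `W_m`, and `E[(z_a W_b)²] = E[z_a²] E[W_b²]`. Hence
`E[B_kl²] = h²/12 + h²/12 + h²/12`, while for `k < l`, `k' < l'` and `(k, l) ≠ (k', l')` the
combinations `B_kl` and `B_k'l'` share no term, so they are orthogonal.
-/

open MeasureTheory ProbabilityTheory
open scoped NNReal ENNReal

namespace ProbabilityTheory

variable {Ω : Type*} {mΩ : MeasurableSpace Ω} {P : Measure Ω}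

lemma HasLaw.of_map_eq {𝓧 : Type*} {m𝓧 : MeasurableSpace 𝓧} {X : Ω → 𝓧} {ν : Measure 𝓧}
    [NeZero ν] (h : P.map X = ν) : HasLaw X ν P :=
  ⟨.of_map_ne_zero (h ▸ NeZero.ne ν), h⟩

namespace HasLaw

variable {X : Ω → ℝ} {m : ℝ} {v : ℝ≥0}

lemma memLp_of_gaussianReal (hX : HasLaw X (gaussianReal m v) P) {p : ℝ≥0∞} (hp : p ≠ ∞) :
    MemLp X p P :=
  hX.hasGaussianLaw.memLp hp

lemma integral_eq_of_gaussianReal (hX : HasLaw X (gaussianReal m v) P) : P[X] = m :=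
  hX.integral_eq.trans integral_id_gaussianReal

lemma integral_sq_of_gaussianReal (hX : HasLaw X (gaussianReal 0 v) P) :
    ∫ ω, X ω ^ 2 ∂P = v := by
  rw [← variance_of_integral_eq_zero hX.aemeasurable hX.integral_eq_of_gaussianReal,
    hX.variance_eq, variance_id_gaussianReal]

end HasLaw

namespace iIndepFun

variable {κ : Type*} {X : κ → Ω → ℝ} (hX : iIndepFun X P) (hmeas : ∀ i, AEMeasurable (X i) P)
include hX hmeas

lemma integral_mul_eq_zero_of_ne {i j : κ} (hij : i ≠ j) (hi : P[X i] = 0) :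
    ∫ ω, X i ω * X j ω ∂P = 0 := by
  rw [(hX.indepFun hij).integral_fun_mul_eq_mul_integral (hmeas i).aestronglyMeasurable
    (hmeas j).aestronglyMeasurable, hi, zero_mul]

lemma integral_mul_mul_eq_zero_of_ne {i j k : κ} (hik : i ≠ k) (hjk : j ≠ k) (hk : P[X k] = 0) :
    ∫ ω, X i ω * X j ω * X k ω ∂P = 0 :=
  ((hX.indepFun_mul_left₀ hmeas i j k hik hjk).integral_fun_mul_eq_mul_integral
    ((hmeas i).mul (hmeas j)).aestronglyMeasurable (hmeas k).aestronglyMeasurable).trans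
    (by rw [hk, mul_zero])

lemma integral_mul_mul_mul_mul {i j k l : κ} (hik : i ≠ k) (hil : i ≠ l) (hjk : j ≠ k)
    (hjl : j ≠ l) :
    ∫ ω, X i ω * X j ω * (X k ω * X l ω) ∂P =
      (∫ ω, X i ω * X j ω ∂P) * ∫ ω, X k ω * X l ω ∂P :=
  (hX.indepFun_mul_mul₀ hmeas i j k l hik hil hjk hjl).integral_fun_mul_eq_mul_integral
    ((hmeas i).mul (hmeas j)).aestronglyMeasurable ((hmeas k).mul (hmeas l)).aestronglyMeasurable

end iIndepFun

end ProbabilityTheory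

namespace MeasureTheory

variable {Ω : Type*} {mΩ : MeasurableSpace Ω} {P : Measure Ω}

lemma MemLp.mul_of_four {f g : Ω → ℝ} (hf : MemLp f 4 P) (hg : MemLp g 4 P) :
    MemLp (fun ω => f ω * g ω) 2 P :=
  haveI : ENNReal.HolderTriple 4 4 2 := ⟨by
    rw [← two_mul, show (4 : ℝ≥0∞) = 2 * 2 by norm_num, ENNReal.mul_inv (by simp) (by simp),
      ← mul_assoc, ENNReal.mul_inv_cancel (by simp) (by simp), one_mul]⟩
  hg.mul' hf

lemma integral_sum_mul_sum_of_pairwise {κ : Type*} (s : Finset κ) {G : κ → Ω → ℝ}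
    (hG : ∀ i, MemLp (G i) 2 P) (horth : Pairwise fun i j => ∫ ω, G i ω * G j ω ∂P = 0)
    (x y : κ → ℝ) :
    ∫ ω, (∑ i ∈ s, x i * G i ω) * (∑ j ∈ s, y j * G j ω) ∂P =
      ∑ i ∈ s, x i * y i * ∫ ω, G i ω ^ 2 ∂P := by
  have hint : ∀ i j, Integrable (fun ω => x i * y j * (G i ω * G j ω)) P :=
    fun i j => ((hG i).integrable_mul (hG j)).const_mul _
  have hexp : ∀ ω, (∑ i ∈ s, x i * G i ω) * (∑ j ∈ s, y j * G j ω) =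
      ∑ i ∈ s, ∑ j ∈ s, x i * y j * (G i ω * G j ω) := fun ω => by
    rw [Finset.sum_mul_sum]
    exact Finset.sum_congr rfl fun i _ => Finset.sum_congr rfl fun j _ => by ring
  simp_rw [hexp]
  rw [integral_finsetSum _ fun i _ => integrable_finsetSum _ fun j _ => hint i j]
  refine Finset.sum_congr rfl fun i hi => ?_
  rw [integral_finsetSum _ fun j _ => hint i j, Finset.sum_eq_single_of_mem i hi]
  · simp_rw [integral_const_mul, sq]
  · intro j _ hji
    rw [integral_const_mul, horth hji.symm, mul_zero]

end MeasureTheory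

section LevyArea

variable {Ω ι : Type*} {mΩ : MeasurableSpace Ω} {P : Measure Ω} (F : ι ⊕ ι ⊕ ι × ι → Ω → ℝ)

-- `z_k = F (.inl k)`, `W_k = F (.inr (.inl k))` and `λ_kl = F (.inr (.inr (k, l)))`.
def levyArea (k l : ι) (ω : Ω) : ℝ :=
  F (.inl k) ω * F (.inr (.inl l)) ω - F (.inl l) ω * F (.inr (.inl k)) ω +
    F (.inr (.inr (k, l))) ω

def levyAreaTerm : ι × ι ⊕ ι × ι → Ω → ℝ
  | .inl (a, b) => fun ω => F (.inl a) ω * F (.inr (.inl b)) ω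
  | .inr p => F (.inr (.inr p))

def levyAreaCoeff [DecidableEq ι] (k l : ι) : ι × ι ⊕ ι × ι → ℝ :=
  Pi.single (.inl (k, l)) 1 - Pi.single (.inl (l, k)) 1 + Pi.single (.inr (k, l)) 1

lemma sum_levyAreaCoeff_mul [DecidableEq ι] [Fintype ι] (k l : ι) (y : ι × ι ⊕ ι × ι → ℝ) :
    ∑ i, levyAreaCoeff k l i * y i = y (.inl (k, l)) - y (.inl (l, k)) + y (.inr (k, l)) := by
  simp only [levyAreaCoeff, Pi.add_apply, Pi.sub_apply, add_mul, sub_mul, Finset.sum_add_distrib,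
    Finset.sum_sub_distrib, Pi.single_apply, ite_mul, one_mul, zero_mul, Finset.sum_ite_eq',
    Finset.mem_univ, if_true]

lemma levyArea_eq_sum [DecidableEq ι] [Fintype ι] (k l : ι) (ω : Ω) :
    levyArea F k l ω = ∑ i, levyAreaCoeff k l i * levyAreaTerm F i ω := by
  rw [sum_levyAreaCoeff_mul]
  rfl

variable {F}

lemma memLp_levyAreaTerm [IsFiniteMeasure P] (h4 : ∀ i, MemLp (F i) 4 P)
    (i : ι × ι ⊕ ι × ι) : MemLp (levyAreaTerm F i) 2 P := by
  rcases i with ⟨a, b⟩ | p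
  · exact (h4 _).mul_of_four (h4 _)
  · exact (h4 _).mono_exponent (by norm_num)

variable (hF : iIndepFun F P) (hmeas : ∀ i, AEMeasurable (F i) P) (hmean : ∀ i, P[F i] = 0)
include hF hmeas hmean

lemma integral_levyAreaTerm (i : ι × ι ⊕ ι × ι) : ∫ ω, levyAreaTerm F i ω ∂P = 0 := by
  rcases i with ⟨a, b⟩ | p
  · exact hF.integral_mul_eq_zero_of_ne hmeas (by simp) (hmean _)
  · exact hmean _

lemma pairwise_integral_levyAreaTerm_mul_eq_zero :
    Pairwise fun i j => ∫ ω, levyAreaTerm F i ω * levyAreaTerm F j ω ∂P = 0 := by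
  rintro (⟨a, b⟩ | p) (⟨a', b'⟩ | q) hij
  · have hregroup : ∀ ω, levyAreaTerm F (.inl (a, b)) ω * levyAreaTerm F (.inl (a', b')) ω =
        F (.inl a) ω * F (.inl a') ω * (F (.inr (.inl b)) ω * F (.inr (.inl b')) ω) :=
      fun ω => by simp only [levyAreaTerm]; ring
    simp_rw [hregroup]
    rw [hF.integral_mul_mul_mul_mul hmeas (by simp) (by simp) (by simp) (by simp)]
    have hab : a ≠ a' ∨ b ≠ b' := by simpa [or_iff_not_imp_left] using hij
    rcases hab with ha | hb
    · rw [hF.integral_mul_eq_zero_of_ne hmeas (by simpa) (hmean _), zero_mul]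
    · rw [hF.integral_mul_eq_zero_of_ne hmeas (i := .inr (.inl b)) (by simpa) (hmean _),
        mul_zero]
  · exact hF.integral_mul_mul_eq_zero_of_ne hmeas (by simp) (by simp) (hmean _)
  · simp_rw [mul_comm (levyAreaTerm F (.inr p) _)]
    exact hF.integral_mul_mul_eq_zero_of_ne hmeas (by simp) (by simp) (hmean _)
  · exact hF.integral_mul_eq_zero_of_ne hmeas (by simpa using hij) (hmean _)

lemma integral_levyAreaTerm_mul_eq_zero (i : ι × ι ⊕ ι × ι) (m : ι) :
    ∫ ω, levyAreaTerm F i ω * F (.inr (.inl m)) ω ∂P = 0 := by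
  rcases i with ⟨a, b⟩ | p
  · have hregroup : ∀ ω, levyAreaTerm F (.inl (a, b)) ω * F (.inr (.inl m)) ω =
        F (.inr (.inl b)) ω * F (.inr (.inl m)) ω * F (.inl a) ω :=
      fun ω => by simp only [levyAreaTerm]; ring
    simp_rw [hregroup]
    exact hF.integral_mul_mul_eq_zero_of_ne hmeas (by simp) (by simp) (hmean _)
  · exact hF.integral_mul_eq_zero_of_ne hmeas (by simp) (hmean _)

omit hmean in
lemma integral_levyAreaTerm_inl_sq (a b : ι) :
    ∫ ω, levyAreaTerm F (.inl (a, b)) ω ^ 2 ∂P =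
      (∫ ω, F (.inl a) ω ^ 2 ∂P) * ∫ ω, F (.inr (.inl b)) ω ^ 2 ∂P := by
  have hregroup : ∀ ω, levyAreaTerm F (.inl (a, b)) ω ^ 2 =
      F (.inl a) ω * F (.inl a) ω * (F (.inr (.inl b)) ω * F (.inr (.inl b)) ω) :=
    fun ω => by simp only [levyAreaTerm]; ring
  simp_rw [hregroup]
  rw [hF.integral_mul_mul_mul_mul hmeas (by simp) (by simp) (by simp) (by simp)]
  simp_rw [sq]


variable [DecidableEq ι] [Fintype ι] [IsFiniteMeasure P] (h4 : ∀ i, MemLp (F i) 4 P)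
include h4

lemma integral_levyArea (k l : ι) : ∫ ω, levyArea F k l ω ∂P = 0 := by
  simp_rw [levyArea_eq_sum]
  rw [integral_finsetSum _ fun i _ => ((memLp_levyAreaTerm h4 i).integrable one_le_two).const_mul _]
  simp [integral_const_mul, integral_levyAreaTerm hF hmeas hmean]

lemma integral_levyArea_mul_levyArea (k l k' l' : ι) :
    ∫ ω, levyArea F k l ω * levyArea F k' l' ω ∂P =
      levyAreaCoeff k' l' (.inl (k, l)) * ∫ ω, levyAreaTerm F (.inl (k, l)) ω ^ 2 ∂P -
        levyAreaCoeff k' l' (.inl (l, k)) * ∫ ω, levyAreaTerm F (.inl (l, k)) ω ^ 2 ∂P +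
        levyAreaCoeff k' l' (.inr (k, l)) * ∫ ω, levyAreaTerm F (.inr (k, l)) ω ^ 2 ∂P := by
  simp_rw [levyArea_eq_sum]
  rw [integral_sum_mul_sum_of_pairwise _ (memLp_levyAreaTerm h4)
    (pairwise_integral_levyAreaTerm_mul_eq_zero hF hmeas hmean)]
  simp_rw [mul_assoc]
  exact sum_levyAreaCoeff_mul k l _

lemma integral_levyArea_sq {k l : ι} (hkl : k ≠ l) :
    ∫ ω, levyArea F k l ω ^ 2 ∂P =
      (∫ ω, F (.inl k) ω ^ 2 ∂P) * (∫ ω, F (.inr (.inl l)) ω ^ 2 ∂P) +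
        (∫ ω, F (.inl l) ω ^ 2 ∂P) * (∫ ω, F (.inr (.inl k)) ω ^ 2 ∂P) +
        ∫ ω, F (.inr (.inr (k, l))) ω ^ 2 ∂P := by
  simp_rw [sq (levyArea F k l _)]
  rw [integral_levyArea_mul_levyArea hF hmeas hmean h4, integral_levyAreaTerm_inl_sq hF hmeas,
    integral_levyAreaTerm_inl_sq hF hmeas]
  simp [levyAreaCoeff, hkl, hkl.symm, levyAreaTerm]

lemma integral_levyArea_mul_levyArea_of_ne {k l k' l' : ι} (hne : (k, l) ≠ (k', l'))
    (hne_swap : (k, l) ≠ (l', k')) :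
    ∫ ω, levyArea F k l ω * levyArea F k' l' ω ∂P = 0 := by
  rw [integral_levyArea_mul_levyArea hF hmeas hmean h4]
  have hne' : ¬(l = l' ∧ k = k') := fun h => hne (Prod.ext h.2 h.1)
  have hne_swap' : ¬(l = k' ∧ k = l') := fun h => hne_swap (Prod.ext h.2 h.1)
  simp only [ne_eq, Prod.mk.injEq] at hne hne_swap
  simp [levyAreaCoeff, hne, hne', hne_swap, hne_swap']

lemma integral_levyArea_mul (k l m : ι) :
    ∫ ω, levyArea F k l ω * F (.inr (.inl m)) ω ∂P = 0 := by
  simp_rw [levyArea_eq_sum, Finset.sum_mul, mul_assoc]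
  rw [integral_finsetSum]
  · simp [integral_const_mul, integral_levyAreaTerm_mul_eq_zero hF hmeas hmean]
  · exact fun i _ => ((memLp_levyAreaTerm h4 i).integrable_mul
      ((h4 _).mono_exponent (p := 2) (by norm_num))).const_mul _

end LevyArea

theorem gaussian_levy_area_moments_general
    {Ω : Type*} [MeasureSpace Ω] [IsProbabilityMeasure (ℙ : Measure Ω)]
    (d : ℕ) (h : NNReal)
    (F : (Fin d ⊕ Fin d ⊕ Fin d × Fin d) → Ω → ℝ)
    (hindep : iIndepFun F ℙ)
    (hz : ∀ k : Fin d, Measure.map (F (Sum.inl k)) ℙ = gaussianReal 0 (h / 12))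
    (hW : ∀ k : Fin d, Measure.map (F (Sum.inr (Sum.inl k))) ℙ = gaussianReal 0 h)
    (hlam : ∀ k l : Fin d,
      Measure.map (F (Sum.inr (Sum.inr (k, l)))) ℙ = gaussianReal 0 (h ^ 2 / 12))
    (B : Fin d → Fin d → Ω → ℝ)
    (hB : ∀ k l : Fin d, B k l = fun ω =>
      F (Sum.inl k) ω * F (Sum.inr (Sum.inl l)) ω
        - F (Sum.inl l) ω * F (Sum.inr (Sum.inl k)) ω
        + F (Sum.inr (Sum.inr (k, l))) ω) :
    (∀ k l : Fin d, k < l → (∫ ω, B k l ω ∂ℙ) = 0) ∧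
    (∀ k l : Fin d, k < l → (∫ ω, (B k l ω) ^ 2 ∂ℙ) = (h : ℝ) ^ 2 / 4) ∧
    (∀ k l k' l' : Fin d, k < l → k' < l' → (k, l) ≠ (k', l') →
      (∫ ω, B k l ω * B k' l' ω ∂ℙ) = 0) ∧
    (∀ k l m : Fin d, k < l →
      (∫ ω, B k l ω * F (Sum.inr (Sum.inl m)) ω ∂ℙ) = 0) := by
  obtain rfl : B = levyArea F := funext₂ hB
  have hlaw : ∀ i, ∃ v : ℝ≥0, HasLaw (F i) (gaussianReal 0 v) ℙ := by
    rintro (k | k | ⟨k, l⟩)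
    exacts [⟨_, .of_map_eq (hz k)⟩, ⟨_, .of_map_eq (hW k)⟩, ⟨_, .of_map_eq (hlam k l)⟩]
  have hmeas i : AEMeasurable (F i) ℙ := (hlaw i).choose_spec.aemeasurable
  have hmean i : ℙ[F i] = 0 := (hlaw i).choose_spec.integral_eq_of_gaussianReal
  have h4 i : MemLp (F i) 4 ℙ := (hlaw i).choose_spec.memLp_of_gaussianReal (by norm_num)
  refine ⟨fun k l _ => integral_levyArea hindep hmeas hmean h4 k l, fun k l hkl => ?_,
    fun k l k' l' hkl hkl' hne =>
      integral_levyArea_mul_levyArea_of_ne hindep hmeas hmean h4 hne ?_,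
    fun k l m _ => integral_levyArea_mul hindep hmeas hmean h4 k l m⟩
  · have hz2 k := (HasLaw.of_map_eq (hz k)).integral_sq_of_gaussianReal
    have hW2 k := (HasLaw.of_map_eq (hW k)).integral_sq_of_gaussianReal
    have hlam2 k l := (HasLaw.of_map_eq (hlam k l)).integral_sq_of_gaussianReal
    rw [integral_levyArea_sq hindep hmeas hmean h4 hkl.ne, hz2, hz2, hW2, hW2, hlam2]
    push_cast
    ring
  · rintro ⟨rfl, rfl⟩
    exact lt_asymm hkl hkl'

/-- Fix `h > 0` and `d ≥ 2`. Let `(z_k)`, `(W_k)` and `(λ_{kl})` be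
jointly independent centered Gaussians with variances `h/12`, `h` and `h²/12`
respectively, and set `B_{kl} := z_k W_l − z_l W_k + λ_{kl}` for `k < l`. Then
(i) `E[B_{kl}] = 0`; (ii) `E[B_{kl}²] = h²/4`; (iii) `E[B_{kl} B_{k'l'}] = 0` for
`(k,l) ≠ (k',l')`; (iv) `E[B_{kl} W_m] = 0` for every `m`. -/
theorem gaussian_levy_area_moments
    {Ω : Type*} [MeasureSpace Ω] [IsProbabilityMeasure (ℙ : Measure Ω)]
    (d : ℕ) (hd : 2 ≤ d) (h : NNReal) (hh : 0 < h)
    (F : (Fin d ⊕ Fin d ⊕ Fin d × Fin d) → Ω → ℝ)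
    (hmeas : ∀ i, Measurable (F i))
    (hindep : iIndepFun F ℙ)
    (hz : ∀ k : Fin d, Measure.map (F (Sum.inl k)) ℙ = gaussianReal 0 (h / 12))
    (hW : ∀ k : Fin d, Measure.map (F (Sum.inr (Sum.inl k))) ℙ = gaussianReal 0 h)
    (hlam : ∀ k l : Fin d,
      Measure.map (F (Sum.inr (Sum.inr (k, l)))) ℙ = gaussianReal 0 (h ^ 2 / 12))
    (B : Fin d → Fin d → Ω → ℝ)
    (hB : ∀ k l : Fin d, B k l = fun ω =>
      F (Sum.inl k) ω * F (Sum.inr (Sum.inl l)) ω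
        - F (Sum.inl l) ω * F (Sum.inr (Sum.inl k)) ω
        + F (Sum.inr (Sum.inr (k, l))) ω) :
    (∀ k l : Fin d, k < l → (∫ ω, B k l ω ∂ℙ) = 0) ∧
    (∀ k l : Fin d, k < l → (∫ ω, (B k l ω) ^ 2 ∂ℙ) = (h : ℝ) ^ 2 / 4) ∧
    (∀ k l k' l' : Fin d, k < l → k' < l' → (k, l) ≠ (k', l') →
      (∫ ω, B k l ω * B k' l' ω ∂ℙ) = 0) ∧
    (∀ k l m : Fin d, k < l →
      (∫ ω, B k l ω * F (Sum.inr (Sum.inl m)) ω ∂ℙ) = 0) :=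
  gaussian_levy_area_moments_general d h F hindep hz hW hlam B hB
end

section
/- Let L be a Lie algebra over a commutative ring R and let S ⊆ L. Then the underlying R-submodule of the Lie subalgebra of L generated by S equals the R-submodule spanned by the set of all right-nested brackets ⁅s₁, ⁅s₂, …, ⁅s_{k−1}, s_k⁆ … ⁆⁆ with k ≥ 1 and s₁, …, s_k ∈ S (the case k = 1 being the elements of S themselves). In particular, every iterated Lie bracket of elements x₁, …, xₙ ∈ L is an R-linear combination of right-nested commutators of those elements. (This is Lemma A.3 of the paper, proved by induction on bracket length using the Jacobi identity.) -/
/-!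
The span `M` of the right-nested brackets is stable under `⁅s, ·⁆` for `s ∈ S`, because
`⁅s, nestedBracket l⁆ = nestedBracket (s :: l)`. By the Jacobi identity the `x` with
`⁅x, M⁆ ⊆ M` form a Lie subalgebra; it contains `S`, hence the Lie span of `S`, which in turn
contains `M`. So `M` is closed under the bracket, i.e. a Lie subalgebra containing `S`.
-/

/-- The right-nested Lie bracket `⁅s₁, ⁅s₂, …, ⁅s_{k−1}, s_k⁆ … ⁆⁆` of a list of
elements of a Lie ring; the empty list is sent to `0` and a singleton to its element. -/
def nestedBracket {L : Type*} [LieRing L] : List L → L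
  | [] => 0
  | [x] => x
  | x :: y :: xs => ⁅x, nestedBracket (y :: xs)⁆

theorem nestedBracket_cons {L : Type*} [LieRing L] (x : L) {l : List L} (hl : l ≠ []) :
    nestedBracket (x :: l) = ⁅x, nestedBracket l⁆ := by
  cases l with
  | nil => exact absurd rfl hl
  | cons y ys => rfl

def nestedBrackets {L : Type*} [LieRing L] (S : Set L) : Set L :=
  {x : L | ∃ l : List L, l ≠ [] ∧ (∀ y ∈ l, y ∈ S) ∧ x = nestedBracket l}

section

variable {R L : Type*} [CommRing R] [LieRing L] [LieAlgebra R L]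

theorem LieSubalgebra.nestedBracket_mem (K : LieSubalgebra R L) :
    ∀ {l : List L}, (∀ y ∈ l, y ∈ K) → nestedBracket l ∈ K
  | [], _ => K.zero_mem
  | [x], hl => hl x (List.mem_singleton_self x)
  | x :: _ :: _, hl =>
    K.lie_mem (hl x List.mem_cons_self)
      (K.nestedBracket_mem fun z hz => hl z (List.mem_cons_of_mem x hz))

def Submodule.lieStabilizer (M : Submodule R L) : LieSubalgebra R L where
  carrier := {x | ∀ m ∈ M, ⁅x, m⁆ ∈ M}
  add_mem' hx hy m hm := by rw [add_lie]; exact M.add_mem (hx m hm) (hy m hm)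
  zero_mem' m _ := by rw [zero_lie]; exact M.zero_mem
  smul_mem' r x hx m hm := by rw [smul_lie]; exact M.smul_mem r (hx m hm)
  lie_mem' {x y} hx hy m hm := by
    rw [lie_lie]; exact M.sub_mem (hx _ (hy m hm)) (hy _ (hx m hm))

theorem LieSubalgebra.coe_lieSpan_eq_of_subset_lieStabilizer {S : Set L} {M : Submodule R L}
    (hSM : S ⊆ M) (hM : M ≤ (LieSubalgebra.lieSpan R L S).toSubmodule)
    (hS : S ⊆ M.lieStabilizer) :
    (LieSubalgebra.lieSpan R L S).toSubmodule = M := by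
  have hMM : M ≤ M.lieStabilizer.toSubmodule := hM.trans (LieSubalgebra.lieSpan_le.mpr hS)
  obtain ⟨K, rfl⟩ := M.exists_lieSubalgebra_coe_eq_iff.mpr fun x y hx hy => hMM hx y hy
  exact le_antisymm (LieSubalgebra.lieSpan_le.mpr hSM) hM

theorem subset_lieStabilizer_span_nestedBrackets (S : Set L) :
    S ⊆ (Submodule.span R (nestedBrackets S)).lieStabilizer := by
  intro s hs m hm
  refine (Submodule.span_le (p := (Submodule.span R _).comap (LieAlgebra.ad R L s)) |>.mpr ?_) hm
  rintro _ ⟨l, hl, hlS, rfl⟩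
  have hsl : ∀ y ∈ s :: l, y ∈ S := by
    simpa only [List.mem_cons, forall_eq_or_imp] using ⟨hs, hlS⟩
  exact Submodule.subset_span ⟨s :: l, List.cons_ne_nil s l, hsl, (nestedBracket_cons s hl).symm⟩

end

/-- For a Lie algebra `L` over a commutative ring `R` and a subset
`S ⊆ L`, the underlying `R`-submodule of the Lie subalgebra generated by `S` equals the
`R`-submodule spanned by all right-nested brackets `⁅s₁, ⁅s₂, …, ⁅s_{k−1}, s_k⁆…⁆⁆`
with `k ≥ 1` and `s₁, …, s_k ∈ S`. -/
theorem lieSpan_eq_span_nestedBrackets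
    (R : Type*) (L : Type*) [CommRing R] [LieRing L] [LieAlgebra R L] (S : Set L) :
    (LieSubalgebra.lieSpan R L S).toSubmodule =
      Submodule.span R
        {x : L | ∃ l : List L, l ≠ [] ∧ (∀ y ∈ l, y ∈ S) ∧ x = nestedBracket l} := by
  change _ = Submodule.span R (nestedBrackets S)
  refine LieSubalgebra.coe_lieSpan_eq_of_subset_lieStabilizer ?_ ?_ ?_
  · intro s hs
    exact Submodule.subset_span ⟨[s], List.cons_ne_nil s [], by simpa using hs, rfl⟩
  · rw [Submodule.span_le]
    rintro _ ⟨l, -, hlS, rfl⟩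
    exact (LieSubalgebra.lieSpan R L S).nestedBracket_mem fun y hy =>
      LieSubalgebra.subset_lieSpan (hlS y hy)
  · exact subset_lieStabilizer_span_nestedBrackets S
end
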